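/- arXiv:1308.2162 — 5 statements merged into one kernel-verified Lean document; each statement's English description precedes it below -/
import Mathlib

section
/- For any x ∈ ℝ^n, the condition √(n−1)·‖x‖ ≤ 𝟙ᵀx holds if and only if there exists t ∈ ℝ such that ‖t·𝟙 − x‖ ≤ t. That is, O_in = {x ∈ ℝ^n : ∃ t ∈ ℝ, ‖t𝟙 − x‖ ≤ t}. -/
/-! Since `‖t • u - x‖² = ‖u‖² t² - 2t⟪u, x⟫ + ‖x‖²`, a nonnegative `t` with `‖t • u - x‖ ≤ t`
exists iff the quadratic `(‖u‖² - 1) t² - 2t⟪u, x⟫ + ‖x‖²` takes a nonpositive value on `t ≥ 0`.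
For `‖u‖ > 1` its minimum, at `t = ⟪u, x⟫ / (‖u‖² - 1)`, is `‖x‖² - ⟪u, x⟫² / (‖u‖² - 1)`, which
gives the criterion; for `u = 𝟙` this covers `n ≥ 2`, and `n ≤ 1` is checked directly. -/

noncomputable def onesVec (n : ℕ) : EuclideanSpace ℝ (Fin n) := WithLp.toLp 2 (fun _ => 1)

open RealInnerProductSpace

section InnerProductSpace

variable {E : Type*} [NormedAddCommGroup E] [InnerProductSpace ℝ E]

theorem norm_smul_sub_sq (t : ℝ) (u x : E) :
    ‖t • u - x‖ ^ 2 = ‖u‖ ^ 2 * t ^ 2 - 2 * t * ⟪u, x⟫ + ‖x‖ ^ 2 := by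
  rw [norm_sub_sq_real, real_inner_smul_left, norm_smul, mul_pow, Real.norm_eq_abs, sq_abs]
  ring

theorem exists_norm_smul_sub_le_iff {u x : E} (hu : 1 < ‖u‖) :
    (∃ t : ℝ, ‖t • u - x‖ ≤ t) ↔ √(‖u‖ ^ 2 - 1) * ‖x‖ ≤ ⟪u, x⟫ := by
  set a := ‖u‖ ^ 2 - 1
  have ha : 0 < a := by nlinarith
  have hsqrt : √a ^ 2 = a := Real.sq_sqrt ha.le
  have hquad (t : ℝ) : ‖t • u - x‖ ^ 2 ≤ t ^ 2 ↔ a * t ^ 2 - 2 * t * ⟪u, x⟫ + ‖x‖ ^ 2 ≤ 0 := by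
    rw [norm_smul_sub_sq]
    constructor <;> intro <;> linarith
  constructor
  · rintro ⟨t, ht⟩
    have ht0 : 0 ≤ t := (norm_nonneg _).trans ht
    have hq := (hquad t).1 (pow_le_pow_left₀ (norm_nonneg _) ht 2)
    rcases ht0.eq_or_lt with rfl | htpos
    · have hx : x = 0 := by simpa using (show ‖x‖ ^ 2 ≤ 0 by simpa using hq)
      simp [hx]
    · -- AM-GM: `2 √a t ‖x‖ ≤ a t² + ‖x‖² ≤ 2 t ⟪u, x⟫`
      have : t * (√a * ‖x‖) ≤ t * ⟪u, x⟫ := by nlinarith [sq_nonneg (√a * t - ‖x‖)]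
      exact le_of_mul_le_mul_left this htpos
  · intro h
    have hs : 0 ≤ ⟪u, x⟫ := le_trans (by positivity) h
    have hsq : a * ‖x‖ ^ 2 ≤ ⟪u, x⟫ ^ 2 := by
      rw [← hsqrt, ← mul_pow]
      exact pow_le_pow_left₀ (by positivity) h 2
    have ht0 : 0 ≤ ⟪u, x⟫ / a := by positivity
    refine ⟨⟪u, x⟫ / a, (pow_le_pow_iff_left₀ (norm_nonneg _) ht0 two_ne_zero).1 ((hquad _).2 ?_)⟩
    field_simp
    nlinarith

end InnerProductSpace

theorem exists_abs_sub_le_self_iff {a : ℝ} : (∃ t : ℝ, |t - a| ≤ t) ↔ 0 ≤ a :=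
  ⟨fun ⟨t, ht⟩ => by linarith [le_abs_self (t - a)], fun ha => ⟨a, by simpa using ha⟩⟩

theorem norm_onesVec_sq (n : ℕ) : ‖onesVec n‖ ^ 2 = n := by
  simp [EuclideanSpace.norm_sq_eq, onesVec]

theorem inner_onesVec_left {n : ℕ} (x : EuclideanSpace ℝ (Fin n)) : ⟪onesVec n, x⟫ = ∑ i, x i := by
  simp [onesVec, PiLp.inner_apply]

theorem norm_smul_onesVec_one_sub (t : ℝ) (x : EuclideanSpace ℝ (Fin 1)) :
    ‖t • onesVec 1 - x‖ = |t - x 0| := by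
  simp [EuclideanSpace.norm_eq, onesVec, Real.sqrt_sq_eq_abs]

theorem Oin_alt_description (n : ℕ) (x : EuclideanSpace ℝ (Fin n)) :
    Real.sqrt ((n : ℝ) - 1) * ‖x‖ ≤ ∑ i, x i ↔
    ∃ t : ℝ, ‖t • onesVec n - x‖ ≤ t := by
  match n, x with
  | 0, x => simpa [Subsingleton.elim x 0] using ⟨0, by simp⟩
  | 1, x => simp [norm_smul_onesVec_one_sub, exists_abs_sub_le_self_iff]
  | n + 2, x =>
    have h1 : 1 < ‖onesVec (n + 2)‖ := by
      rw [← one_lt_sq_iff₀ (norm_nonneg _), norm_onesVec_sq]; push_cast; linarith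
    rw [exists_norm_smul_sub_le_iff h1, norm_onesVec_sq, inner_onesVec_left]
end

section
/- Let P = {x : Hᵀx ≤ 𝟙} with vertex matrix V and slack matrix S = 𝟙_{f×v} − HᵀV. Suppose A, B are nonnegative K*- and K-maps with S = AᵀB exactly (an exact K-factorization). Then the set C_A = {x ∈ ℝ^n : ∃ y ∈ K, 𝟙 − Hᵀx − Aᵀy = 0} contains every vertex of P, and hence (by convexity of C_A and C_A ⊆ Inn_P(A) ⊆ P) Inn_P(A) = P. -/
open RealInnerProductSpace

/-!
The vertex `V j` is cut out exactly by the column `B eⱼ ∈ K` of the factorization, so every vertex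
lies in the convex set `C_A`, hence so does `P = conv V`; a point of `C_A` has slack `0 ∈ O_in`.
Conversely a slack vector in `O_in` has nonnegative coordinates (Cauchy–Schwarz on the other
`f - 1` coordinates), and `Aᵀy ≥ 0` for `y ∈ K`, so `Hᵀx ≤ 𝟙`.
-/

namespace EuclideanSpace

variable {ι : Type*} [Fintype ι]

theorem sum_erase_le_sqrt_card_sub_one_mul_norm [DecidableEq ι] (z : EuclideanSpace ℝ ι) (k : ι) :
    ∑ i ∈ Finset.univ.erase k, z i ≤ √((Fintype.card ι : ℝ) - 1) * ‖z‖ := by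
  set s := Finset.univ.erase k
  have hcard : (s.card : ℝ) = (Fintype.card ι : ℝ) - 1 := by
    rw [Finset.card_erase_of_mem (Finset.mem_univ k), Finset.card_univ,
      Nat.cast_sub (Fintype.card_pos_iff.2 ⟨k⟩), Nat.cast_one]
  have hsq : ∑ i ∈ s, z i ^ 2 ≤ ‖z‖ ^ 2 := by
    rw [real_norm_sq_eq]
    exact Finset.sum_le_sum_of_subset_of_nonneg s.subset_univ fun i _ _ => sq_nonneg _
  calc ∑ i ∈ s, z i ≤ √(s.card * ‖z‖ ^ 2) :=
        Real.le_sqrt_of_sq_le (sq_sum_le_card_mul_sum_sq.trans (by gcongr))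
    _ = √((Fintype.card ι : ℝ) - 1) * ‖z‖ := by
      rw [hcard, Real.sqrt_mul (hcard ▸ s.card.cast_nonneg), Real.sqrt_sq (norm_nonneg z)]

theorem nonneg_of_sqrt_card_sub_one_mul_norm_le_sum {z : EuclideanSpace ℝ ι}
    (hz : √((Fintype.card ι : ℝ) - 1) * ‖z‖ ≤ ∑ i, z i) (k : ι) : 0 ≤ z k := by
  classical
  rw [← Finset.add_sum_erase _ _ (Finset.mem_univ k)] at hz
  linarith [sum_erase_le_sqrt_card_sub_one_mul_norm z k]

theorem adjoint_apply_eq_inner_single [DecidableEq ι] {F : Type*} [NormedAddCommGroup F]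
    [InnerProductSpace ℝ F] [CompleteSpace F] (A : EuclideanSpace ℝ ι →L[ℝ] F) (y : F) (i : ι) :
    (ContinuousLinearMap.adjoint A y) i = ⟪A (EuclideanSpace.single i 1), y⟫ := by
  rw [← ContinuousLinearMap.adjoint_inner_right, EuclideanSpace.inner_single_left, map_one,
    one_mul]

end EuclideanSpace

open EuclideanSpace

section ExactSlackSet

variable {ι E F : Type*} [Fintype ι] [NormedAddCommGroup E] [InnerProductSpace ℝ E]
  [NormedAddCommGroup F] [InnerProductSpace ℝ F] [CompleteSpace F]

/-- The paper's `C_A`, with `H` given by its columns `h i`. -/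
def exactSlackSet (h : ι → E) (K : Set F) (A : EuclideanSpace ℝ ι →L[ℝ] F) : Set E :=
  {x | ∃ y ∈ K, ∀ i, 1 - ⟪h i, x⟫ - (ContinuousLinearMap.adjoint A y) i = 0}

theorem convex_exactSlackSet (h : ι → E) {K : Set F} (hK : Convex ℝ K)
    (A : EuclideanSpace ℝ ι →L[ℝ] F) : Convex ℝ (exactSlackSet h K A) := by
  rintro x₁ ⟨y₁, hy₁, hx₁⟩ x₂ ⟨y₂, hy₂, hx₂⟩ a b ha hb hab
  refine ⟨a • y₁ + b • y₂, hK hy₁ hy₂ ha hb hab, fun i => ?_⟩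
  have e₁ := hx₁ i
  have e₂ := hx₂ i
  simp only [inner_add_right, inner_smul_right, map_add, map_smul, PiLp.add_apply,
    PiLp.smul_apply, smul_eq_mul]
  linear_combination a * e₁ + b * e₂ - hab

theorem mem_exactSlackSet_of_slack_eq_inner [DecidableEq ι] {h : ι → E} {K : Set F}
    {A : EuclideanSpace ℝ ι →L[ℝ] F} {x : E} {w : F} (hw : w ∈ K)
    (hslack : ∀ i, 1 - ⟪h i, x⟫ = ⟪A (EuclideanSpace.single i 1), w⟫) :
    x ∈ exactSlackSet h K A :=
  ⟨w, hw, fun i => by rw [adjoint_apply_eq_inner_single, hslack, sub_self]⟩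

end ExactSlackSet

theorem exact_factorization_inn_eq_P_general (n f v m : ℕ)
    (h : Fin f → EuclideanSpace ℝ (Fin n))
    (V : Fin v → EuclideanSpace ℝ (Fin n))
    (hPV : {x : EuclideanSpace ℝ (Fin n) | ∀ i, ⟪h i, x⟫ ≤ 1} =
      convexHull ℝ (Set.range V))
    (K : Set (EuclideanSpace ℝ (Fin m)))
    (hKconv : Convex ℝ K)
    (A : EuclideanSpace ℝ (Fin f) →L[ℝ] EuclideanSpace ℝ (Fin m))
    (B : EuclideanSpace ℝ (Fin v) →L[ℝ] EuclideanSpace ℝ (Fin m))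
    (hA : ∀ i : Fin f, A (EuclideanSpace.single i 1) ∈
      {w : EuclideanSpace ℝ (Fin m) | ∀ y ∈ K, 0 ≤ ⟪w, y⟫})
    (hB : ∀ j : Fin v, B (EuclideanSpace.single j 1) ∈ K)
    (hfact : ∀ (i : Fin f) (j : Fin v),
      1 - ⟪h i, V j⟫ = ⟪A (EuclideanSpace.single i 1), B (EuclideanSpace.single j 1)⟫) :
    (∀ j : Fin v, ∃ y ∈ K, ∀ i : Fin f,
        1 - ⟪h i, V j⟫ - (ContinuousLinearMap.adjoint A y) i = 0) ∧
    {x : EuclideanSpace ℝ (Fin n) | ∃ y ∈ K,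
        (WithLp.toLp 2 (fun i => 1 - ⟪h i, x⟫ - (ContinuousLinearMap.adjoint A y) i) :
          EuclideanSpace ℝ (Fin f)) ∈
        {z : EuclideanSpace ℝ (Fin f) | Real.sqrt ((f : ℝ) - 1) * ‖z‖ ≤ ∑ i, z i}} =
      {x : EuclideanSpace ℝ (Fin n) | ∀ i, ⟪h i, x⟫ ≤ 1} := by
  have hvert (j : Fin v) : V j ∈ exactSlackSet h K A :=
    mem_exactSlackSet_of_slack_eq_inner (hB j) fun i => hfact i j
  refine ⟨hvert, Set.Subset.antisymm ?_ ?_⟩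
  · rintro x ⟨y, hy, hz⟩ i
    have hslack := nonneg_of_sqrt_card_sub_one_mul_norm_le_sum
      (by rw [Fintype.card_fin]; exact hz) i
    have hAy := adjoint_apply_eq_inner_single A y i ▸ hA i y hy
    linarith
  · intro x hx
    have hC : convexHull ℝ (Set.range V) ⊆ exactSlackSet h K A :=
      convexHull_min (Set.range_subset_iff.2 hvert) (convex_exactSlackSet h hKconv A)
    obtain ⟨y, hy, hzero⟩ := hC (hPV ▸ hx)
    have hslack : (WithLp.toLp 2 fun i => 1 - ⟪h i, x⟫ - (ContinuousLinearMap.adjoint A y) i :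
        EuclideanSpace ℝ (Fin f)) = 0 := by
      ext i
      exact hzero i
    exact ⟨y, hy, by rw [hslack]; simp⟩

theorem exact_factorization_inn_eq_P (n f v m : ℕ)
    (h : Fin f → EuclideanSpace ℝ (Fin n))
    (V : Fin v → EuclideanSpace ℝ (Fin n))
    (hPV : {x : EuclideanSpace ℝ (Fin n) | ∀ i, ⟪h i, x⟫ ≤ 1} =
      convexHull ℝ (Set.range V))
    (K : Set (EuclideanSpace ℝ (Fin m)))
    (hKclosed : IsClosed K) (hKconv : Convex ℝ K)
    (hKcone : ∀ c : ℝ, 0 ≤ c → ∀ y ∈ K, c • y ∈ K)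
    (A : EuclideanSpace ℝ (Fin f) →L[ℝ] EuclideanSpace ℝ (Fin m))
    (B : EuclideanSpace ℝ (Fin v) →L[ℝ] EuclideanSpace ℝ (Fin m))
    (hA : ∀ i : Fin f, A (EuclideanSpace.single i 1) ∈
      {w : EuclideanSpace ℝ (Fin m) | ∀ y ∈ K, 0 ≤ ⟪w, y⟫})
    (hB : ∀ j : Fin v, B (EuclideanSpace.single j 1) ∈ K)
    (hfact : ∀ (i : Fin f) (j : Fin v),
      1 - ⟪h i, V j⟫ = ⟪A (EuclideanSpace.single i 1), B (EuclideanSpace.single j 1)⟫) :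
    (∀ j : Fin v, ∃ y ∈ K, ∀ i : Fin f,
        1 - ⟪h i, V j⟫ - (ContinuousLinearMap.adjoint A y) i = 0) ∧
    {x : EuclideanSpace ℝ (Fin n) | ∃ y ∈ K,
        (WithLp.toLp 2 (fun i => 1 - ⟪h i, x⟫ - (ContinuousLinearMap.adjoint A y) i) :
          EuclideanSpace ℝ (Fin f)) ∈
        {z : EuclideanSpace ℝ (Fin f) | Real.sqrt ((f : ℝ) - 1) * ‖z‖ ≤ ∑ i, z i}} =
      {x : EuclideanSpace ℝ (Fin n) | ∀ i, ⟪h i, x⟫ ≤ 1} :=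
  exact_factorization_inn_eq_P_general n f v m h V hPV K hKconv A B hA hB hfact
end

section
/- If 0 is in the interior of polytope P, then Out_P(B) = {Vz : z ∈ O_out^v, 𝟙ᵀz ≤ 1, Bz ∈ K} equals {Vz : z ∈ O_out^v, 𝟙ᵀz = 1, Bz ∈ K}, i.e., the inequality 𝟙ᵀz ≤ 1 may be replaced by equality. -/
/-! Given `z` with `‖z‖ ≤ 𝟙ᵀz = s ≤ 1` and `Bz ∈ K`, the point `z + (1 - s) λ` has coordinate sum
`1`, still lies in `O_out^v` by the triangle inequality since `‖λ‖ ≤ 𝟙ᵀλ = 1`, and still maps into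
the cone `K` because `Bλ` is a convex combination of the `B eⱼ ∈ K`. Since `Vλ = 0`, it represents
the same point `Vz`. -/

open Finset

theorem Convex.add_mem_of_smul_mem {E : Type*} [AddCommGroup E] [Module ℝ E] {K : Set E}
    (hK : Convex ℝ K) (hsmul : ∀ c : ℝ, 0 ≤ c → ∀ y ∈ K, c • y ∈ K) {a b : E}
    (ha : a ∈ K) (hb : b ∈ K) : a + b ∈ K := by
  have hmid := hK ha hb (by norm_num : (0 : ℝ) ≤ 1 / 2) (by norm_num : (0 : ℝ) ≤ 1 / 2)
    (by norm_num)
  convert hsmul 2 zero_le_two _ hmid using 1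
  rw [smul_add, smul_smul, smul_smul]
  norm_num

namespace EuclideanSpace

variable {ι : Type*} [Fintype ι]

theorem sum_smul_single_one [DecidableEq ι] (x : EuclideanSpace ℝ ι) :
    ∑ j, x j • EuclideanSpace.single j (1 : ℝ) = x := by
  simpa only [basisFun_repr, basisFun_apply] using (basisFun ι ℝ).sum_repr x

theorem norm_le_sum_norm (x : EuclideanSpace ℝ ι) : ‖x‖ ≤ ∑ j, ‖x j‖ := by
  classical
  conv_lhs => rw [← sum_smul_single_one x]
  refine (norm_sum_le _ _).trans_eq ?_
  simp [norm_smul]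

theorem norm_le_sum_of_nonneg {x : EuclideanSpace ℝ ι} (hx : ∀ j, 0 ≤ x j) :
    ‖x‖ ≤ ∑ j, x j :=
  (norm_le_sum_norm x).trans_eq (sum_congr rfl fun j _ => Real.norm_of_nonneg (hx j))

theorem map_mem_of_map_single_mem [DecidableEq ι] {E : Type*} [AddCommGroup E] [Module ℝ E]
    {K : Set E} (hK : Convex ℝ K) (f : EuclideanSpace ℝ ι →ₗ[ℝ] E)
    (hf : ∀ j, f (EuclideanSpace.single j 1) ∈ K) {x : EuclideanSpace ℝ ι}
    (hx0 : ∀ j, 0 ≤ x j) (hx1 : ∑ j, x j = 1) : f x ∈ K := by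
  rw [← sum_smul_single_one x, map_sum]
  simp_rw [map_smul]
  exact hK.sum_mem (fun j _ => hx0 j) hx1 fun j _ => hf j

end EuclideanSpace

theorem norm_add_smul_le_one {E : Type*} [SeminormedAddCommGroup E] [NormedSpace ℝ E]
    {z w : E} {s : ℝ} (hz : ‖z‖ ≤ s) (hs : s ≤ 1) (hw : ‖w‖ ≤ 1) :
    ‖z + (1 - s) • w‖ ≤ 1 :=
  calc ‖z + (1 - s) • w‖ ≤ ‖z‖ + (1 - s) * ‖w‖ := by
        simpa [norm_smul, abs_of_nonneg (sub_nonneg.2 hs)] using norm_add_le z ((1 - s) • w)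
    _ ≤ s + (1 - s) * 1 := by gcongr
    _ = 1 := by ring

theorem out_eq_slice (n v m : ℕ)
    (V : Fin v → EuclideanSpace ℝ (Fin n))
    (lam : Fin v → ℝ) (hlam0 : ∀ j, 0 ≤ lam j) (hlam1 : ∑ j, lam j = 1)
    (hlamV : ∑ j, lam j • V j = 0)
    (K : Set (EuclideanSpace ℝ (Fin m)))
    (hKconv : Convex ℝ K)
    (hKcone : ∀ c : ℝ, 0 ≤ c → ∀ y ∈ K, c • y ∈ K)
    (B : EuclideanSpace ℝ (Fin v) →L[ℝ] EuclideanSpace ℝ (Fin m))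
    (hB : ∀ j : Fin v, B (EuclideanSpace.single j 1) ∈ K) :
    {x : EuclideanSpace ℝ (Fin n) | ∃ z : EuclideanSpace ℝ (Fin v),
        ‖z‖ ≤ ∑ j, z j ∧ (∑ j, z j) ≤ 1 ∧ B z ∈ K ∧ x = ∑ j, z j • V j} =
    {x : EuclideanSpace ℝ (Fin n) | ∃ z : EuclideanSpace ℝ (Fin v),
        ‖z‖ ≤ ∑ j, z j ∧ (∑ j, z j) = 1 ∧ B z ∈ K ∧ x = ∑ j, z j • V j} := by
  refine Set.Subset.antisymm ?_ fun x ⟨z, hnorm, hsum, hBz, hx⟩ => ⟨z, hnorm, hsum.le, hBz, hx⟩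
  rintro x ⟨z, hnorm, hle, hBz, rfl⟩
  set s := ∑ j, z j
  set w : EuclideanSpace ℝ (Fin v) := WithLp.toLp 2 lam
  have hBw : B w ∈ K :=
    EuclideanSpace.map_mem_of_map_single_mem hKconv B.toLinearMap hB hlam0 hlam1
  have hsum : ∑ j, (z + (1 - s) • w) j = 1 := by
    simp [w, s, sum_add_distrib, ← mul_sum, hlam1]
  refine ⟨z + (1 - s) • w, ?_, hsum, ?_, ?_⟩
  · rw [hsum]
    exact norm_add_smul_le_one hnorm hle
      ((EuclideanSpace.norm_le_sum_of_nonneg hlam0).trans_eq hlam1)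
  · rw [map_add, map_smul]
    exact hKconv.add_mem_of_smul_mem hKcone hBz (hKcone _ (sub_nonneg.2 hle) _ hBw)
  · simp only [WithLp.ofLp_add, WithLp.ofLp_smul, Pi.add_apply, Pi.smul_apply, smul_eq_mul, w,
      add_smul, mul_smul, sum_add_distrib, ← smul_sum, hlamV, smul_zero, add_zero]
end

section
/- Let P = {x : Hᵀx ≤ 𝟙} be a polytope with f facets such that the origin is its analytic center, so that ∑_i h_i = 0 and every column of the slack matrix S sums to f. Then P ⊆ (f−1)·Inn_P(0), where Inn_P(0) = {x : 𝟙 − Hᵀx ∈ O_in^f}. -/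
/-!
For `x ∈ P` the slack vector `s = 𝟙 - Hᵀx` is nonnegative, and `∑ hᵢ = 0` forces `∑ sᵢ = f`.
Then `𝟙 - Hᵀx / (f - 1) = ((f - 2)𝟙 + s) / (f - 1)`, and since `‖s‖ ≤ 𝟙ᵀs = f` for a
nonnegative vector, `‖(f - 2)𝟙 + s‖² ≤ f(f - 2)² + 2f(f - 2) + f² = f²(f - 1)`, which is exactly
the inequality `√(f - 1)‖(f - 2)𝟙 + s‖ ≤ 𝟙ᵀ((f - 2)𝟙 + s) = f(f - 1)` defining `O_in^f`.
-/

open RealInnerProductSpace Pointwise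

/-- The paper's cone `O_in^m`. -/
def inCone (m : ℕ) : Set (EuclideanSpace ℝ (Fin m)) :=
  {z | √((m : ℝ) - 1) * ‖z‖ ≤ ∑ i, z i}

namespace inCone

variable {m : ℕ}

theorem smul_mem {z : EuclideanSpace ℝ (Fin m)} (hz : z ∈ inCone m) {c : ℝ} (hc : 0 ≤ c) :
    c • z ∈ inCone m := by
  have hsum : ∑ i, (c • z) i = c * ∑ i, z i := by simp [Finset.mul_sum]
  show √((m : ℝ) - 1) * ‖c • z‖ ≤ ∑ i, (c • z) i
  rw [hsum, norm_smul, Real.norm_of_nonneg hc]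
  calc √((m : ℝ) - 1) * (c * ‖z‖) = c * (√((m : ℝ) - 1) * ‖z‖) := by ring
    _ ≤ c * ∑ i, z i := by gcongr; exact hz

theorem mem_of_sq_le {z : EuclideanSpace ℝ (Fin m)} (hnonneg : 0 ≤ ∑ i, z i)
    (hsq : ((m : ℝ) - 1) * ‖z‖ ^ 2 ≤ (∑ i, z i) ^ 2) : z ∈ inCone m := by
  show √((m : ℝ) - 1) * ‖z‖ ≤ ∑ i, z i
  calc √((m : ℝ) - 1) * ‖z‖ = √(((m : ℝ) - 1) * ‖z‖ ^ 2) := by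
        rw [Real.sqrt_mul' _ (sq_nonneg _), Real.sqrt_sq (norm_nonneg _)]
    _ ≤ √((∑ i, z i) ^ 2) := Real.sqrt_le_sqrt hsq
    _ = ∑ i, z i := Real.sqrt_sq hnonneg

end inCone

theorem sum_sq_const_add_le {ι : Type*} [Fintype ι] (c : ℝ) {s : ι → ℝ} (hs : ∀ i, 0 ≤ s i) :
    ∑ i, (c + s i) ^ 2 ≤ Fintype.card ι * c ^ 2 + 2 * c * ∑ i, s i + (∑ i, s i) ^ 2 := by
  have hexpand : ∑ i, (c + s i) ^ 2 =
      Fintype.card ι * c ^ 2 + 2 * c * ∑ i, s i + ∑ i, s i ^ 2 := by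
    simp only [add_sq, Finset.sum_add_distrib, Finset.sum_const, Finset.card_univ, nsmul_eq_mul,
      Finset.mul_sum]
  rw [hexpand]
  gcongr
  exact Finset.sum_sq_le_sq_sum_of_nonneg fun i _ => hs i

theorem mem_inCone_const_add {m : ℕ} (hm : 1 ≤ m) {s : Fin m → ℝ} (hs : ∀ i, 0 ≤ s i)
    (hsum : ∑ i, s i = m) :
    (WithLp.toLp 2 (fun i => ((m : ℝ) - 2) + s i) : EuclideanSpace ℝ (Fin m)) ∈ inCone m := by
  have hm' : (1 : ℝ) ≤ m := by exact_mod_cast hm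
  have hsum' : ∑ i, (((m : ℝ) - 2) + s i) = m * ((m : ℝ) - 1) := by
    rw [Finset.sum_add_distrib, hsum]
    simp only [Finset.sum_const, Finset.card_univ, Fintype.card_fin, nsmul_eq_mul]
    ring
  have hnorm : ∑ i, (((m : ℝ) - 2) + s i) ^ 2 ≤ (m : ℝ) ^ 2 * ((m : ℝ) - 1) := by
    have := sum_sq_const_add_le ((m : ℝ) - 2) hs
    rw [hsum, Fintype.card_fin] at this
    linarith
  refine inCone.mem_of_sq_le ?_ ?_ <;>
    simp only [EuclideanSpace.real_norm_sq_eq, hsum']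
  · have : (0 : ℝ) ≤ m - 1 := by linarith
    positivity
  · calc ((m : ℝ) - 1) * ∑ i, (((m : ℝ) - 2) + s i) ^ 2
        ≤ ((m : ℝ) - 1) * ((m : ℝ) ^ 2 * ((m : ℝ) - 1)) :=
          mul_le_mul_of_nonneg_left hnorm (by linarith)
      _ = (m * ((m : ℝ) - 1)) ^ 2 := by ring

theorem sum_one_sub_inner_eq_card {E ι : Type*} [NormedAddCommGroup E] [InnerProductSpace ℝ E]
    [Fintype ι] {h : ι → E} (hsum : ∑ i, h i = 0) (x : E) :
    ∑ i, (1 - ⟪h i, x⟫) = Fintype.card ι := by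
  rw [Finset.sum_sub_distrib, ← sum_inner, hsum, inner_zero_left]
  simp

theorem analytic_center_outer_bound_general (n f : ℕ) (hf : 2 ≤ f)
    (h : Fin f → EuclideanSpace ℝ (Fin n))
    (hsum : ∑ i, h i = 0) :
    {x : EuclideanSpace ℝ (Fin n) | ∀ i, ⟪h i, x⟫ ≤ 1} ⊆
      ((f : ℝ) - 1) •
        {x : EuclideanSpace ℝ (Fin n) |
          (WithLp.toLp 2 (fun i => 1 - ⟪h i, x⟫) : EuclideanSpace ℝ (Fin f)) ∈
          {z : EuclideanSpace ℝ (Fin f) | Real.sqrt ((f : ℝ) - 1) * ‖z‖ ≤ ∑ i, z i}} := by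
  intro x hx
  have hf1 : (0 : ℝ) < f - 1 := by
    have : (2 : ℝ) ≤ f := by exact_mod_cast hf
    linarith
  rw [Set.mem_smul_set_iff_inv_smul_mem₀ hf1.ne']
  have hslack : ∑ i, (1 - ⟪h i, x⟫) = f := by
    simpa using sum_one_sub_inner_eq_card hsum x
  have hshift := mem_inCone_const_add (by omega) (fun i => sub_nonneg.2 (hx i)) hslack
  have hscaled : (WithLp.toLp 2 (fun i => 1 - ⟪h i, ((f : ℝ) - 1)⁻¹ • x⟫) :
        EuclideanSpace ℝ (Fin f)) =
      ((f : ℝ) - 1)⁻¹ • WithLp.toLp 2 (fun i => ((f : ℝ) - 2) + (1 - ⟪h i, x⟫)) := by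
    ext i
    simp only [real_inner_smul_right, PiLp.smul_apply, smul_eq_mul]
    field_simp
    ring
  show _ ∈ inCone f
  rw [hscaled]
  exact inCone.smul_mem hshift (inv_nonneg.2 hf1.le)

theorem analytic_center_outer_bound (n f v : ℕ) (hf : 2 ≤ f)
    (h : Fin f → EuclideanSpace ℝ (Fin n))
    (V : Fin v → EuclideanSpace ℝ (Fin n))
    (hPV : {x : EuclideanSpace ℝ (Fin n) | ∀ i, ⟪h i, x⟫ ≤ 1} =
      convexHull ℝ (Set.range V))
    (hP0 : (0 : EuclideanSpace ℝ (Fin n)) ∈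
      interior {x : EuclideanSpace ℝ (Fin n) | ∀ i, ⟪h i, x⟫ ≤ 1})
    (hsum : ∑ i, h i = 0) :
    {x : EuclideanSpace ℝ (Fin n) | ∀ i, ⟪h i, x⟫ ≤ 1} ⊆
      ((f : ℝ) - 1) •
        {x : EuclideanSpace ℝ (Fin n) |
          (WithLp.toLp 2 (fun i => 1 - ⟪h i, x⟫) : EuclideanSpace ℝ (Fin f)) ∈
          {z : EuclideanSpace ℝ (Fin f) | Real.sqrt ((f : ℝ) - 1) * ‖z‖ ≤ ∑ i, z i}} :=
  analytic_center_outer_bound_general n f hf h hsum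
end

section
/- Let P ⊆ Q ⊆ ℝ^n where P = conv{p₁,…,p_v} is a polytope with 0 in its interior and Q = {x : ⟨h_j,x⟩ ≤ 1, j=1,…,f} a polyhedron, with generalized slack matrix S_{P,Q} = 𝟙 − H_QᵀV_P. If A, B are nonnegative K*- and K-maps with S_{P,Q} = AᵀB, then C_B ⊆ C_A, where C_B = {V_P z : 𝟙ᵀz = 1, Bz ∈ K} and C_A = {x : ∃ y ∈ K, 𝟙 − H_Qᵀx − Aᵀy = 0}. Consequently P ⊆ C_B ⊆ C_A ⊆ Q. -/
/-!
`C_B` is the image of a convex set of coefficient vectors `z`, hence convex, and it contains every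
vertex `p_j` (take `z = e_j`, so `B z` is a column of `B`, which lies in `K`); therefore it
contains `P`. For `x = V_P z ∈ C_B` the witness `y = B z` works, because the factorization gives
`⟪A e_i, B z⟫ = ∑ⱼ zⱼ (1 - ⟪h_i, p_j⟫) = 1 - ⟪h_i, x⟫` once `∑ⱼ zⱼ = 1`. Finally the columns of
`A` lie in `K*`, so `1 - ⟪h_i, x⟫ = ⟪A e_i, y⟫ ≥ 0` for `y ∈ K`, which puts `C_A` inside `Q`.
-/

open RealInnerProductSpace

theorem EuclideanSpace.map_eq_sum_smul_map_single {𝕜 ι M : Type*} [RCLike 𝕜] [Fintype ι]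
    [DecidableEq ι] [AddCommMonoid M] [Module 𝕜 M] (L : EuclideanSpace 𝕜 ι →ₗ[𝕜] M)
    (z : EuclideanSpace 𝕜 ι) : L z = ∑ j, z j • L (EuclideanSpace.single j 1) := by
  conv_lhs => rw [← (EuclideanSpace.basisFun ι 𝕜).sum_repr z]
  simp only [map_sum, map_smul, EuclideanSpace.basisFun_repr, EuclideanSpace.basisFun_apply]

section Lifts

variable {ι κ E F : Type*} [Fintype ι]
  [NormedAddCommGroup E] [InnerProductSpace ℝ E] [NormedAddCommGroup F] [InnerProductSpace ℝ F]

/-- The set `C_B = {V_P z : 𝟙ᵀz = 1, Bz ∈ K}`. -/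
def vertexLift (V : ι → E) (K : Set F) (B : EuclideanSpace ℝ ι →ₗ[ℝ] F) : Set E :=
  {x | ∃ z : EuclideanSpace ℝ ι, ∑ j, z j = 1 ∧ B z ∈ K ∧ x = ∑ j, z j • V j}

/-- The set `C_A = {x : ∃ y ∈ K, 𝟙 - H_Qᵀx - Aᵀy = 0}`, where `a i` is the `i`-th column of `A`. -/
def facetLift (h : κ → E) (K : Set F) (a : κ → F) : Set E :=
  {x | ∃ y ∈ K, ∀ i, 1 - ⟪h i, x⟫ - ⟪a i, y⟫ = 0}

variable {V : ι → E} {K : Set F} {B : EuclideanSpace ℝ ι →ₗ[ℝ] F}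

theorem convex_vertexLift (hK : Convex ℝ K) : Convex ℝ (vertexLift V K B) := by
  rintro _ ⟨z, hz, hzK, rfl⟩ _ ⟨z', hz', hzK', rfl⟩ s t hs ht hst
  refine ⟨s • z + t • z', ?_, ?_, ?_⟩
  · simp [Finset.sum_add_distrib, ← Finset.mul_sum, hz, hz', hst]
  · rw [map_add, map_smul, map_smul]
    exact hK hzK hzK' hs ht hst
  · simp [add_smul, mul_smul, Finset.sum_add_distrib, Finset.smul_sum]

variable [DecidableEq ι]

theorem mem_vertexLift (j : ι) (hB : B (EuclideanSpace.single j 1) ∈ K) :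
    V j ∈ vertexLift V K B :=
  ⟨EuclideanSpace.single j 1, by simp, hB, by simp⟩

theorem convexHull_subset_vertexLift (hK : Convex ℝ K)
    (hB : ∀ j, B (EuclideanSpace.single j 1) ∈ K) :
    convexHull ℝ (Set.range V) ⊆ vertexLift V K B :=
  convexHull_min (Set.range_subset_iff.2 fun j => mem_vertexLift j (hB j)) (convex_vertexLift hK)

theorem vertexLift_subset_facetLift {h : κ → E} {a : κ → F}
    (hfact : ∀ i j, 1 - ⟪h i, V j⟫ = ⟪a i, B (EuclideanSpace.single j 1)⟫) :
    vertexLift V K B ⊆ facetLift h K a := by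
  rintro _ ⟨z, hz, hzK, rfl⟩
  refine ⟨B z, hzK, fun i => ?_⟩
  have hslack : ⟪a i, B z⟫ = 1 - ⟪h i, ∑ j, z j • V j⟫ := by
    simp only [EuclideanSpace.map_eq_sum_smul_map_single B z, inner_sum, real_inner_smul_right,
      ← hfact, mul_sub, mul_one, Finset.sum_sub_distrib, hz]
  rw [hslack]
  ring

theorem facetLift_subset {h : κ → E} {a : κ → F} (ha : ∀ i, ∀ y ∈ K, 0 ≤ ⟪a i, y⟫) :
    facetLift h K a ⊆ {x | ∀ i, ⟪h i, x⟫ ≤ 1} := by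
  rintro x ⟨y, hy, hslack⟩ i
  linarith [hslack i, ha i y hy]

end Lifts

theorem nested_polyhedra_containments_general (n f v m : ℕ)
    (h : Fin f → EuclideanSpace ℝ (Fin n))
    (V : Fin v → EuclideanSpace ℝ (Fin n))
    (K : Set (EuclideanSpace ℝ (Fin m)))
    (hKconv : Convex ℝ K)
    (A : EuclideanSpace ℝ (Fin f) →L[ℝ] EuclideanSpace ℝ (Fin m))
    (B : EuclideanSpace ℝ (Fin v) →L[ℝ] EuclideanSpace ℝ (Fin m))
    (hA : ∀ i : Fin f, A (EuclideanSpace.single i 1) ∈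
      {w : EuclideanSpace ℝ (Fin m) | ∀ y ∈ K, 0 ≤ ⟪w, y⟫})
    (hB : ∀ j : Fin v, B (EuclideanSpace.single j 1) ∈ K)
    (hfact : ∀ (i : Fin f) (j : Fin v),
      1 - ⟪h i, V j⟫ = ⟪A (EuclideanSpace.single i 1), B (EuclideanSpace.single j 1)⟫) :
    (convexHull ℝ (Set.range V) ⊆
      {x : EuclideanSpace ℝ (Fin n) | ∃ z : EuclideanSpace ℝ (Fin v),
        (∑ j, z j) = 1 ∧ B z ∈ K ∧ x = ∑ j, z j • V j}) ∧
    ({x : EuclideanSpace ℝ (Fin n) | ∃ z : EuclideanSpace ℝ (Fin v),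
        (∑ j, z j) = 1 ∧ B z ∈ K ∧ x = ∑ j, z j • V j} ⊆
      {x : EuclideanSpace ℝ (Fin n) | ∃ y ∈ K, ∀ i : Fin f,
        1 - ⟪h i, x⟫ - ⟪A (EuclideanSpace.single i 1), y⟫ = 0}) ∧
    ({x : EuclideanSpace ℝ (Fin n) | ∃ y ∈ K, ∀ i : Fin f,
        1 - ⟪h i, x⟫ - ⟪A (EuclideanSpace.single i 1), y⟫ = 0} ⊆
      {x : EuclideanSpace ℝ (Fin n) | ∀ i, ⟪h i, x⟫ ≤ 1}) :=
  ⟨convexHull_subset_vertexLift (B := B.toLinearMap) hKconv hB,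
    vertexLift_subset_facetLift (B := B.toLinearMap) hfact, facetLift_subset hA⟩

theorem nested_polyhedra_containments (n f v m : ℕ)
    (h : Fin f → EuclideanSpace ℝ (Fin n))
    (V : Fin v → EuclideanSpace ℝ (Fin n))
    (hP0 : (0 : EuclideanSpace ℝ (Fin n)) ∈ interior (convexHull ℝ (Set.range V)))
    (K : Set (EuclideanSpace ℝ (Fin m)))
    (hKclosed : IsClosed K) (hKconv : Convex ℝ K)
    (hKcone : ∀ c : ℝ, 0 ≤ c → ∀ y ∈ K, c • y ∈ K)
    (A : EuclideanSpace ℝ (Fin f) →L[ℝ] EuclideanSpace ℝ (Fin m))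
    (B : EuclideanSpace ℝ (Fin v) →L[ℝ] EuclideanSpace ℝ (Fin m))
    (hA : ∀ i : Fin f, A (EuclideanSpace.single i 1) ∈
      {w : EuclideanSpace ℝ (Fin m) | ∀ y ∈ K, 0 ≤ ⟪w, y⟫})
    (hB : ∀ j : Fin v, B (EuclideanSpace.single j 1) ∈ K)
    (hfact : ∀ (i : Fin f) (j : Fin v),
      1 - ⟪h i, V j⟫ = ⟪A (EuclideanSpace.single i 1), B (EuclideanSpace.single j 1)⟫) :
    (convexHull ℝ (Set.range V) ⊆
      {x : EuclideanSpace ℝ (Fin n) | ∃ z : EuclideanSpace ℝ (Fin v),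
        (∑ j, z j) = 1 ∧ B z ∈ K ∧ x = ∑ j, z j • V j}) ∧
    ({x : EuclideanSpace ℝ (Fin n) | ∃ z : EuclideanSpace ℝ (Fin v),
        (∑ j, z j) = 1 ∧ B z ∈ K ∧ x = ∑ j, z j • V j} ⊆
      {x : EuclideanSpace ℝ (Fin n) | ∃ y ∈ K, ∀ i : Fin f,
        1 - ⟪h i, x⟫ - ⟪A (EuclideanSpace.single i 1), y⟫ = 0}) ∧
    ({x : EuclideanSpace ℝ (Fin n) | ∃ y ∈ K, ∀ i : Fin f,
        1 - ⟪h i, x⟫ - ⟪A (EuclideanSpace.single i 1), y⟫ = 0} ⊆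
      {x : EuclideanSpace ℝ (Fin n) | ∀ i, ⟪h i, x⟫ ≤ 1}) :=
  nested_polyhedra_containments_general n f v m h V K hKconv A B hA hB hfact
end
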